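/- The quadratic form Q(ξ) = ξ₁₁² + ξ₂₂² + ξ₃₃² − 2ξ₁₁ξ₂₂ − 2ξ₂₂ξ₃₃ − 2ξ₃₃ξ₁₁ + ξ₁₂² + ξ₂₃² + ξ₃₁² on 3×3 real matrices is quasiconvex: Q(x ⊗ y) ≥ 0 for all x, y ∈ ℝ³. -/
import Mathlib


/-- The tensor (outer) product of two vectors in ℝ³, as a 3×3 matrix:
`(x ⊗ y) i j = x i * y j`. -/
def outer (x y : Fin 3 → ℝ) : Matrix (Fin 3) (Fin 3) ℝ :=
  fun i j => x i * y j

/-- The quadratic form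
`Q(ξ) = ξ₁₁² + ξ₂₂² + ξ₃₃² − 2ξ₁₁ξ₂₂ − 2ξ₂₂ξ₃₃ − 2ξ₃₃ξ₁₁ + ξ₁₂² + ξ₂₃² + ξ₃₁²`. -/
def Q (ξ : Matrix (Fin 3) (Fin 3) ℝ) : ℝ :=
  ξ 0 0 ^ 2 + ξ 1 1 ^ 2 + ξ 2 2 ^ 2
    - 2 * ξ 0 0 * ξ 1 1 - 2 * ξ 1 1 * ξ 2 2 - 2 * ξ 2 2 * ξ 0 0
    + ξ 0 1 ^ 2 + ξ 1 2 ^ 2 + ξ 2 0 ^ 2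

/-- AM–GM for three nonnegative reals in the cyclic form we need. -/
lemma amgm3 (X Y Z : ℝ) (hX : 0 ≤ X) (hY : 0 ≤ Y) (hZ : 0 ≤ Z) :
    3*X*Y*Z ≤ X^2*Y + X*Z^2 + Y^2*Z := by
  nlinarith [mul_nonneg hX (sq_nonneg (Y-Z)), mul_nonneg hY (sq_nonneg (Z-X)),
    mul_nonneg hZ (sq_nonneg (X-Y)), mul_nonneg hX (sq_nonneg (X-Z)),
    mul_nonneg hY (sq_nonneg (Y-X)), mul_nonneg hZ (sq_nonneg (Z-Y)),
    mul_nonneg hX (sq_nonneg (X-Y)), mul_nonneg hY (sq_nonneg (Y-Z)),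
    mul_nonneg hZ (sq_nonneg (Z-X))]

/-- The core inequality: Choi's biquadratic form is nonnegative. -/
lemma choi_nonneg (a b c u v w : ℝ) :
    0 ≤ (a*u)^2 + (b*v)^2 + (c*w)^2
      - 2*(a*u)*(b*v) - 2*(b*v)*(c*w) - 2*(c*w)*(a*u)
      + (a*v)^2 + (b*w)^2 + (c*u)^2 := by
  by_cases ha : a = 0
  · subst ha; nlinarith [sq_nonneg (b*v - c*w), sq_nonneg (b*w), sq_nonneg (c*u)]
  · -- general case: complete squares with positive multiplier (a²+c²)·A, A = a⁴+a²c²+b²c²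
    have hm : (0:ℝ) < a^2 + c^2 := by positivity
    have hA : (0:ℝ) < a^4 + a^2*c^2 + b^2*c^2 := by positivity
    have hdet : 0 ≤ a^4*b^2 + a^2*c^4 + b^4*c^2 - 3*a^2*b^2*c^2 := by
      have := amgm3 (a^2) (b^2) (c^2) (sq_nonneg a) (sq_nonneg b) (sq_nonneg c)
      nlinarith [this]
    set A : ℝ := a^4 + a^2*c^2 + b^2*c^2 with hAdef
    have key : (a^2 + c^2) * A *
        ((a*u)^2 + (b*v)^2 + (c*w)^2
          - 2*(a*u)*(b*v) - 2*(b*v)*(c*w) - 2*(c*w)*(a*u)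
          + (a*v)^2 + (b*w)^2 + (c*u)^2)
        = A * ((a^2+c^2)*u - a*b*v - c*a*w)^2
          + (A*v + (-(b*c)*(2*a^2+c^2))*w)^2
          + (a^2+c^2) * (a^4*b^2 + a^2*c^4 + b^4*c^2 - 3*a^2*b^2*c^2) * w^2 := by
      ring
    have hRHS : 0 ≤ A * ((a^2+c^2)*u - a*b*v - c*a*w)^2
          + (A*v + (-(b*c)*(2*a^2+c^2))*w)^2
          + (a^2+c^2) * (a^4*b^2 + a^2*c^4 + b^4*c^2 - 3*a^2*b^2*c^2) * w^2 := by
      have h1 : 0 ≤ A * ((a^2+c^2)*u - a*b*v - c*a*w)^2 := mul_nonneg hA.le (sq_nonneg _)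
      have h2 : 0 ≤ (A*v + (-(b*c)*(2*a^2+c^2))*w)^2 := sq_nonneg _
      have h3 : 0 ≤ (a^2+c^2) * (a^4*b^2 + a^2*c^4 + b^4*c^2 - 3*a^2*b^2*c^2) * w^2 :=
        mul_nonneg (mul_nonneg hm.le hdet) (sq_nonneg w)
      linarith
    have hprod : 0 < (a^2 + c^2) * A := mul_pos hm hA
    have := key ▸ hRHS
    exact nonneg_of_mul_nonneg_right this hprod

/-- `Q` is quasiconvex (rank-one convex): `Q(x ⊗ y) ≥ 0` for all `x, y ∈ ℝ³`. -/
theorem Q_quasiconvex : ∀ x y : Fin 3 → ℝ, 0 ≤ Q (outer x y) := by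
  intro x y
  have := choi_nonneg (x 0) (x 1) (x 2) (y 0) (y 1) (y 2)
  simpa [Q, outer] using this
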